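/- With the same setup and α ≥ 2, the Tsallis free energy dissipation rate satisfies −dF_α/dt ≥ (u_α/(MN)^(α−1))·Σ_j |Σ_{i≠j}(p_i q_ij − p_j q_ji)|^α, where u_α > 0 is the constant from the Leindler-type inequality. -/

import Mathlib

/-!
Write `f = p / μ`. Because `Q` has zero row sums and `μ Q = 0`, the dissipation `-dF_α/dt` equals
`∑_j ∑_i μ_i q_ij B(f_j, f_i)`, where `B` is the Bregman divergence of `x ↦ x^α / (α (α - 1))`.
`B` is homogeneous of degree `α`, so the Leindler-type inequality rescales to
`B(x, y) ≥ u |y - x|^α`. The net flux into `j` is `∑_{i ≠ j} μ_i q_ij (f_i - f_j)`, and Hölder's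
inequality with the weights `μ_i q_ij`, whose sum is at most `M ≤ MN`, bounds its `α`-th power by
`(MN)^(α-1) ∑_{i ≠ j} μ_i q_ij |f_i - f_j|^α`.
-/

open Finset Real

theorem abs_sum_mul_rpow_le {ι : Type*} (s : Finset ι) {w g : ι → ℝ} {p K : ℝ} (hp : 1 ≤ p)
    (hw : ∀ i ∈ s, 0 ≤ w i) (hK : ∑ i ∈ s, w i ≤ K) :
    |∑ i ∈ s, w i * g i| ^ p ≤ K ^ (p - 1) * ∑ i ∈ s, w i * |g i| ^ p := by
  have hp₀ : 0 < p := by linarith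
  have hW : 0 ≤ ∑ i ∈ s, w i := sum_nonneg hw
  have hT : 0 ≤ ∑ i ∈ s, w i * |g i| ^ p :=
    sum_nonneg fun i hi => mul_nonneg (hw i hi) (by positivity)
  have triangle : |∑ i ∈ s, w i * g i| ≤ ∑ i ∈ s, w i * |g i| :=
    (abs_sum_le_sum_abs _ _).trans_eq
      (sum_congr rfl fun i hi => by rw [abs_mul, abs_of_nonneg (hw i hi)])
  have holder : ∑ i ∈ s, w i * |g i| ≤
      (∑ i ∈ s, w i) ^ (1 - p⁻¹) * (∑ i ∈ s, w i * |g i| ^ p) ^ p⁻¹ := by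
    -- the library's weighted Hölder inequality wants the weights nonnegative off `s` as well
    have hmax : ∀ i ∈ s, max (w i) 0 = w i := fun i hi => max_eq_left (hw i hi)
    convert inner_le_weight_mul_Lp_of_nonneg s hp (fun i => max (w i) 0) (fun i => |g i|)
      (fun _ => le_max_right _ _) (fun _ => abs_nonneg _) using 5 <;>
      exact (hmax _ ‹_›).symm
  calc |∑ i ∈ s, w i * g i| ^ p
      ≤ ((∑ i ∈ s, w i) ^ (1 - p⁻¹) * (∑ i ∈ s, w i * |g i| ^ p) ^ p⁻¹) ^ p := by
        gcongr
        exact triangle.trans holder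
    _ = (∑ i ∈ s, w i) ^ (p - 1) * ∑ i ∈ s, w i * |g i| ^ p := by
        rw [mul_rpow (by positivity) (by positivity), ← rpow_mul hW, ← rpow_mul hT,
          sub_mul, inv_mul_cancel₀ hp₀.ne', one_mul, rpow_one]
    _ ≤ K ^ (p - 1) * ∑ i ∈ s, w i * |g i| ^ p := by
        gcongr

noncomputable def bregmanDiv (φ φ' : ℝ → ℝ) (x y : ℝ) : ℝ := φ y - φ x - φ' x * (y - x)

theorem bregmanDiv_self (φ φ' : ℝ → ℝ) (x : ℝ) : bregmanDiv φ φ' x x = 0 := by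
  simp [bregmanDiv]

theorem sum_sum_mul_bregmanDiv_eq {ι : Type*} [Fintype ι] (φ φ' : ℝ → ℝ) {q : ι → ι → ℝ}
    {μ : ι → ℝ} (f : ι → ℝ) (hqrow : ∀ i, ∑ j, q i j = 0) (hstat : ∀ j, ∑ i, μ i * q i j = 0) :
    ∑ j, ∑ i, μ i * q i j * bregmanDiv φ φ' (f j) (f i) =
      -∑ j, φ' (f j) * ∑ i, μ i * f i * q i j := by
  have column : ∀ j, ∑ i, μ i * q i j * bregmanDiv φ φ' (f j) (f i) =
      ∑ i, μ i * φ (f i) * q i j - φ' (f j) * ∑ i, μ i * f i * q i j := by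
    intro j
    calc ∑ i, μ i * q i j * bregmanDiv φ φ' (f j) (f i)
        = ∑ i, (μ i * φ (f i) * q i j - φ' (f j) * (μ i * f i * q i j)
            - (φ (f j) - φ' (f j) * f j) * (μ i * q i j)) :=
          sum_congr rfl fun i _ => by unfold bregmanDiv; ring
      _ = _ := by
          rw [sum_sub_distrib, sum_sub_distrib, ← mul_sum, ← mul_sum, hstat, mul_zero, sub_zero]
  have rows : ∑ j, ∑ i, μ i * φ (f i) * q i j = 0 := by
    rw [sum_comm]
    exact sum_eq_zero fun i _ => by rw [← mul_sum, hqrow, mul_zero]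
  rw [sum_congr rfl fun j _ => column j, sum_sub_distrib, rows, zero_sub]

noncomputable abbrev tsallisBregman (α : ℝ) : ℝ → ℝ → ℝ :=
  bregmanDiv (fun x => x ^ α / (α * (α - 1))) (fun x => α * x ^ (α - 1) / (α * (α - 1)))

theorem tsallisBregman_one_left (α z : ℝ) :
    tsallisBregman α 1 (z + 1) = 1 / (α * (α - 1)) * ((z + 1) ^ α - 1 - α * z) := by
  simp only [bregmanDiv, one_rpow]
  ring

theorem tsallisBregman_eq_rpow_mul {α x y : ℝ} (hx : 0 < x) (hy : 0 ≤ y) :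
    tsallisBregman α x y = x ^ α * tsallisBregman α 1 (y / x) := by
  simp only [bregmanDiv, one_rpow, div_rpow hy hx.le, rpow_sub_one hx.ne']
  have : x ^ α ≠ 0 := (rpow_pos_of_pos hx α).ne'
  field_simp

theorem mul_abs_sub_rpow_le_tsallisBregman {α u x y : ℝ}
    (hu : ∀ z, -1 ≤ z → u * |z| ^ α ≤ tsallisBregman α 1 (z + 1)) (hx : 0 < x) (hy : 0 ≤ y) :
    u * |y - x| ^ α ≤ tsallisBregman α x y := by
  have hz := hu (y / x - 1) (by linarith [div_nonneg hy hx.le])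
  rw [sub_add_cancel] at hz
  calc u * |y - x| ^ α = x ^ α * (u * |y / x - 1| ^ α) := by
        rw [div_sub_one hx.ne', abs_div, abs_of_pos hx, div_rpow (abs_nonneg _) hx.le]
        field_simp [(rpow_pos_of_pos hx α).ne']
    _ ≤ tsallisBregman α x y := by
        rw [tsallisBregman_eq_rpow_mul hx hy]
        exact mul_le_mul_of_nonneg_left hz (by positivity)

theorem hasDerivAt_mul_div_rpow {g : ℝ → ℝ} {g' c α t : ℝ} (hg : HasDerivAt g g' t)
    (hpos : 0 < g t / c) :
    HasDerivAt (fun s => g s * (g s / c) ^ (α - 1)) (α * (g t / c) ^ (α - 1) * g') t := by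
  have hc : c ≠ 0 := fun h => by simp [h] at hpos
  have hg0 : g t ≠ 0 := fun h => by simp [h] at hpos
  refine (hg.mul ((hg.div_const c).rpow_const (p := α - 1) (Or.inl hpos.ne'))).congr_deriv ?_
  rw [rpow_sub_one hpos.ne' (α - 1)]
  field_simp
  ring

noncomputable def tsallisFreeEnergy {ι : Type*} [Fintype ι] (α : ℝ) (μ p : ι → ℝ) : ℝ :=
  1 / (α * (α - 1)) * ((∑ i, p i * (p i / μ i) ^ (α - 1)) - 1)

theorem hasDerivAt_tsallisFreeEnergy {ι : Type*} [Fintype ι] {α t : ℝ} {μ : ι → ℝ}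
    {p : ℝ → ι → ℝ} {p' : ι → ℝ} (hp : ∀ i, HasDerivAt (fun s => p s i) (p' i) t)
    (hpos : ∀ i, 0 < p t i / μ i) :
    HasDerivAt (fun s => tsallisFreeEnergy α μ (p s))
      (∑ i, α * (p t i / μ i) ^ (α - 1) / (α * (α - 1)) * p' i) t := by
  refine (((HasDerivAt.fun_sum fun i _ => hasDerivAt_mul_div_rpow (hp i) (hpos i)).sub_const
    1).const_mul (1 / (α * (α - 1)))).congr_deriv ?_
  rw [mul_sum]
  exact sum_congr rfl fun i _ => by ring

section Generator

variable {ι : Type*} [Fintype ι] [DecidableEq ι] {q : ι → ι → ℝ} {μ : ι → ℝ}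

theorem sum_erase_flux_eq (f : ι → ℝ) (hqrow : ∀ i, ∑ j, q i j = 0)
    (hstat : ∀ j, ∑ i, μ i * q i j = 0) (j : ι) :
    ∑ i ∈ univ.erase j, (μ i * f i * q i j - μ j * f j * q j i) =
      ∑ i ∈ univ.erase j, μ i * q i j * (f i - f j) := by
  rw [sum_erase _ (sub_self _), sum_erase _ (by rw [sub_self, mul_zero]), sum_sub_distrib,
    ← mul_sum, hqrow, mul_zero, sub_zero]
  simp only [mul_sub, sum_sub_distrib, ← sum_mul, hstat, zero_mul, sub_zero]
  exact sum_congr rfl fun i _ => by ring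

theorem sum_erase_mul_le {M : ℝ} (hM : ∀ i j, i ≠ j → q i j ≤ M) (hM₀ : 0 ≤ M)
    (hμ : ∀ i, 0 ≤ μ i) (hμ1 : ∑ i, μ i = 1) (j : ι) :
    ∑ i ∈ univ.erase j, μ i * q i j ≤ M :=
  calc ∑ i ∈ univ.erase j, μ i * q i j
      ≤ ∑ i ∈ univ.erase j, μ i * M :=
        sum_le_sum fun i hi => mul_le_mul_of_nonneg_left (hM i j (ne_of_mem_erase hi)) (hμ i)
    _ = M * ∑ i ∈ univ.erase j, μ i := by rw [← sum_mul, mul_comm]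
    _ ≤ M * ∑ i, μ i :=
        mul_le_mul_of_nonneg_left
          (sum_le_sum_of_subset_of_nonneg (erase_subset _ _) fun i _ _ => hμ i) hM₀
    _ = M := by rw [hμ1, mul_one]

theorem abs_sum_erase_flux_rpow_le {M K α : ℝ} (hq : ∀ i j, i ≠ j → 0 ≤ q i j)
    (hM : ∀ i j, i ≠ j → q i j ≤ M) (hM₀ : 0 ≤ M) (hMK : M ≤ K) (hμ : ∀ i, 0 ≤ μ i)
    (hμ1 : ∑ i, μ i = 1) (hqrow : ∀ i, ∑ j, q i j = 0) (hstat : ∀ j, ∑ i, μ i * q i j = 0)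
    (hα : 1 ≤ α) (f : ι → ℝ) (j : ι) :
    |∑ i ∈ univ.erase j, (μ i * f i * q i j - μ j * f j * q j i)| ^ α ≤
      K ^ (α - 1) * ∑ i ∈ univ.erase j, μ i * q i j * |f i - f j| ^ α := by
  rw [sum_erase_flux_eq f hqrow hstat]
  exact abs_sum_mul_rpow_le _ hα (fun i hi => mul_nonneg (hμ i) (hq i j (ne_of_mem_erase hi)))
    ((sum_erase_mul_le hM hM₀ hμ hμ1 j).trans hMK)

theorem mul_sum_erase_rpow_le_sum_tsallisBregman {α u : ℝ} (hq : ∀ i j, i ≠ j → 0 ≤ q i j)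
    (hμ : ∀ i, 0 ≤ μ i) (hu : ∀ z, -1 ≤ z → u * |z| ^ α ≤ tsallisBregman α 1 (z + 1))
    {f : ι → ℝ} (hf : ∀ i, 0 < f i) (j : ι) :
    u * ∑ i ∈ univ.erase j, μ i * q i j * |f i - f j| ^ α ≤
      ∑ i, μ i * q i j * tsallisBregman α (f j) (f i) := by
  have hdiag : μ j * q j j * tsallisBregman α (f j) (f j) = 0 := by
    rw [tsallisBregman, bregmanDiv_self, mul_zero]
  rw [mul_sum]
  refine (sum_le_sum fun i hi => ?_).trans_eq (sum_erase _ hdiag)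
  calc u * (μ i * q i j * |f i - f j| ^ α) = μ i * q i j * (u * |f i - f j| ^ α) := by ring
    _ ≤ μ i * q i j * tsallisBregman α (f j) (f i) :=
        mul_le_mul_of_nonneg_left (mul_abs_sub_rpow_le_tsallisBregman hu (hf j) (hf i).le)
          (mul_nonneg (hμ i) (hq i j (ne_of_mem_erase hi)))

end Generator

theorem tsallis_dissipation_lower_bound_ge_two_general (N : ℕ) (q : Fin N → Fin N → ℝ)
    (μ : Fin N → ℝ) (M α u : ℝ) (p : ℝ → Fin N → ℝ)
    (hq : ∀ i j, i ≠ j → 0 ≤ q i j)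
    (hqrow : ∀ i, ∑ j, q i j = 0)
    (hμpos : ∀ i, 0 < μ i) (hμ1 : ∑ i, μ i = 1)
    (hstat : ∀ j, ∑ i, μ i * q i j = 0)
    (hM : ∀ i j, i ≠ j → q i j ≤ M) (hMpos : 0 < M)
    (hα : 2 ≤ α) (hu : 0 < u)
    (huIneq : ∀ z : ℝ, -1 ≤ z →
      (1 / (α * (α - 1))) * ((z + 1) ^ α - 1 - α * z) ≥ u * |z| ^ α)
    (hderiv : ∀ i t, HasDerivAt (fun s => p s i) (∑ j, p t j * q j i) t)
    (hppos : ∀ t i, 0 < p t i) :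
    ∀ t D, HasDerivAt (fun s =>
        (1 / (α * (α - 1))) * ((∑ i, p s i * (p s i / μ i) ^ (α - 1)) - 1)) D t →
      -D ≥ (u / (M * N) ^ (α - 1)) *
        ∑ j, |∑ i ∈ Finset.univ.erase j, (p t i * q i j - p t j * q j i)| ^ α := by
  intro t D hD
  set f : Fin N → ℝ := fun i => p t i / μ i
  have hf : ∀ i, 0 < f i := fun i => div_pos (hppos t i) (hμpos i)
  have hμf : ∀ i, μ i * f i = p t i := fun i => mul_div_cancel₀ _ (hμpos i).ne'
  have hdiss : -D = ∑ j, ∑ i, μ i * q i j * tsallisBregman α (f j) (f i) := by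
    have hD' := (hasDerivAt_tsallisFreeEnergy (fun i => hderiv i t) hf).unique hD
    rw [sum_sum_mul_bregmanDiv_eq _ _ f hqrow hstat]
    simp only [hμf]
    exact congrArg Neg.neg hD'.symm
  rw [ge_iff_le, hdiss, mul_sum]
  refine sum_le_sum fun j _ => ?_
  have hN : (1 : ℝ) ≤ N := Nat.one_le_cast.2 j.pos
  have hK : 0 < (M * N) ^ (α - 1) := by positivity
  calc u / (M * N) ^ (α - 1) * |∑ i ∈ univ.erase j, (p t i * q i j - p t j * q j i)| ^ α
      ≤ u / (M * N) ^ (α - 1) *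
          ((M * N) ^ (α - 1) * ∑ i ∈ univ.erase j, μ i * q i j * |f i - f j| ^ α) := by
        simp only [← hμf]
        gcongr
        exact abs_sum_erase_flux_rpow_le hq hM hMpos.le (le_mul_of_one_le_right hMpos.le hN)
          (fun i => (hμpos i).le) hμ1 hqrow hstat (by linarith) f j
    _ = u * ∑ i ∈ univ.erase j, μ i * q i j * |f i - f j| ^ α := by
        rw [← mul_assoc, div_mul_cancel₀ _ hK.ne']
    _ ≤ ∑ i, μ i * q i j * tsallisBregman α (f j) (f i) :=
        mul_sum_erase_rpow_le_sum_tsallisBregman hq (fun i => (hμpos i).le)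
          (fun z hz => by rw [tsallisBregman_one_left]; exact huIneq z hz) hf j

theorem tsallis_dissipation_lower_bound_ge_two (N : ℕ) (q : Fin N → Fin N → ℝ)
    (μ : Fin N → ℝ) (M α u : ℝ) (p : ℝ → Fin N → ℝ)
    (hq : ∀ i j, i ≠ j → 0 ≤ q i j)
    (hqrow : ∀ i, ∑ j, q i j = 0)
    (hirr : ∀ i j : Fin N, i ≠ j → ∃ (m : ℕ) (c : Fin (m + 1) → Fin N),
      c 0 = i ∧ c (Fin.last m) = j ∧ ∀ k : Fin m, 0 < q (c k.castSucc) (c k.succ))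
    (hμpos : ∀ i, 0 < μ i) (hμ1 : ∑ i, μ i = 1)
    (hstat : ∀ j, ∑ i, μ i * q i j = 0)
    (hM : ∀ i j, i ≠ j → q i j ≤ M) (hMpos : 0 < M)
    (hα : 2 ≤ α) (hu : 0 < u)
    (huIneq : ∀ z : ℝ, -1 ≤ z →
      (1 / (α * (α - 1))) * ((z + 1) ^ α - 1 - α * z) ≥ u * |z| ^ α)
    (hderiv : ∀ i t, HasDerivAt (fun s => p s i) (∑ j, p t j * q j i) t)
    (hppos : ∀ t i, 0 < p t i) (hpsum : ∀ t, ∑ i, p t i = 1) :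
    ∀ t D, HasDerivAt (fun s =>
        (1 / (α * (α - 1))) * ((∑ i, p s i * (p s i / μ i) ^ (α - 1)) - 1)) D t →
      -D ≥ (u / (M * N) ^ (α - 1)) *
        ∑ j, |∑ i ∈ Finset.univ.erase j, (p t i * q i j - p t j * q j i)| ^ α :=
  tsallis_dissipation_lower_bound_ge_two_general N q μ M α u p hq hqrow hμpos hμ1 hstat hM hMpos hα
    hu huIneq hderiv hppos
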